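/- Let G be a non-Hamiltonian graph on n vertices, C a longest cycle of G with a fixed orientation, R a component of G − V(C), and v_i, v_j distinct vertices of C joined by a path with all internal vertices in R. If v_i⁻v_i⁺ ∈ Ẽ(G), then v_i v_j⁻ ∉ Ẽ(G) and v_i v_j⁺ ∉ Ẽ(G). -/

import Mathlib

open SimpleGraph

/-- A vertex is heavy if its degree is at least half the number of vertices. -/
def Heavy {V : Type*} [Fintype V] (G : SimpleGraph V) (v : V) : Prop :=
  Fintype.card V ≤ 2 * (G.neighborSet v).ncard

/-- `{x,y} ∈ Ẽ(G)`: distinct vertices that are adjacent or have degree sum at least `n`. -/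
def TEdge {V : Type*} [Fintype V] (G : SimpleGraph V) (x y : V) : Prop :=
  x ≠ y ∧ (G.Adj x y ∨
    Fintype.card V ≤ (G.neighborSet x).ncard + (G.neighborSet y).ncard)

/-- `a` is the center and `b,c,d` the end vertices of an induced claw `K_{1,3}`. -/
def IsClaw {V : Type*} (G : SimpleGraph V) (a b c d : V) : Prop :=
  G.Adj a b ∧ G.Adj a c ∧ G.Adj a d ∧
    ¬ G.Adj b c ∧ ¬ G.Adj b d ∧ ¬ G.Adj c d ∧ b ≠ c ∧ b ≠ d ∧ c ≠ d

/-- Every claw has at least one heavy end vertex. -/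
def OneHeavy {V : Type*} [Fintype V] (G : SimpleGraph V) : Prop :=
  ∀ a b c d, IsClaw G a b c d → Heavy G b ∨ Heavy G c ∨ Heavy G d

/-- Every claw has at least two heavy end vertices. -/
def TwoHeavy {V : Type*} [Fintype V] (G : SimpleGraph V) : Prop :=
  ∀ a b c d, IsClaw G a b c d →
    (Heavy G b ∧ Heavy G c) ∨ (Heavy G b ∧ Heavy G d) ∨ (Heavy G c ∧ Heavy G d)

/-- Every claw has two end vertices with degree sum at least `n`. -/
def ClawHeavy {V : Type*} [Fintype V] (G : SimpleGraph V) : Prop :=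
  ∀ a b c d, IsClaw G a b c d →
    Fintype.card V ≤ (G.neighborSet b).ncard + (G.neighborSet c).ncard ∨
    Fintype.card V ≤ (G.neighborSet b).ncard + (G.neighborSet d).ncard ∨
    Fintype.card V ≤ (G.neighborSet c).ncard + (G.neighborSet d).ncard

/-- `G` contains no induced claw. -/
def ClawFree {V : Type*} (G : SimpleGraph V) : Prop :=
  ∀ a b c d, ¬ IsClaw G a b c d

/-- Almost distance-hereditary: in every connected induced subgraph the distance
between two vertices exceeds their distance in `G` by at most one. -/
def AlmostDH {V : Type*} (G : SimpleGraph V) : Prop :=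
  ∀ s : Set V, (G.induce s).Connected →
    ∀ x y : s, (G.induce s).dist x y ≤ G.dist (x : V) (y : V) + 1

/-- Distance-hereditary: every connected induced subgraph preserves distances. -/
def DistHered {V : Type*} (G : SimpleGraph V) : Prop :=
  ∀ s : Set V, (G.induce s).Connected →
    ∀ x y : s, (G.induce s).dist x y = G.dist (x : V) (y : V)

/-- A cycle in `G`, encoded as an injective cyclic sequence of `m ≥ 3` pairwise
adjacent-in-order vertices. -/
def IsCycleMap {V : Type*} (G : SimpleGraph V) (m : ℕ) (f : ZMod m → V) : Prop :=
  3 ≤ m ∧ Function.Injective f ∧ ∀ i, G.Adj (f i) (f (i + 1))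

/-- A longest cycle of `G`. -/
def IsLongestCycleMap {V : Type*} (G : SimpleGraph V) (m : ℕ) (f : ZMod m → V) : Prop :=
  IsCycleMap G m f ∧ ∀ (m' : ℕ) (f' : ZMod m' → V), IsCycleMap G m' f' → m' ≤ m

/-- `R` is a connected component of the subgraph of `G` induced on `W`. -/
def IsCompOf {V : Type*} (G : SimpleGraph V) (W R : Set V) : Prop :=
  R.Nonempty ∧ R ⊆ W ∧ (G.induce R).Connected ∧
    ∀ x ∈ R, ∀ y ∈ W, G.Adj x y → y ∈ R

/-!
Suppose `v_i v_j⁻ ∈ Ẽ(G)` and add the `Ẽ`-edge `v_i⁻ v_i⁺` to `G`. Then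
`v_i P v_j v_j⁺ ⋯ v_i⁻ v_i⁺ ⋯ v_j⁻` is a path on at least `|C| + 1` vertices whose ends are joined
in `Ẽ`. Ore's argument (either the ends have crossing neighbours on the path, or the degree sum
forces a common neighbour off the path) closes a path with `Ẽ`-adjacent ends into a cycle on at
least as many vertices. This gives a cycle longer than `C` in `G + v_i⁻ v_i⁺`; if it uses the new
edge, deleting it leaves a path from `v_i⁻` to `v_i⁺` in `G`, which Ore's argument closes once
more. Either way `G` has a cycle longer than `C`. The claim for `v_j⁺` is the claim for `v_j⁻`
on the reversed orientation of `C`.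
-/

open Finset

theorem Cycle.chain_coe_iff_getElem {α : Type*} {r : α → α → Prop} {l : List α} (hl : l ≠ []) :
    Cycle.Chain r (l : Cycle α) ↔
      ∀ i (hi : i < l.length), r l[i] (l[(i + 1) % l.length]'(Nat.mod_lt _ (by omega))) := by
  obtain ⟨a, t, rfl⟩ := List.exists_cons_of_ne_nil hl
  have hsucc : ∀ i (hi : i < (a :: t).length),
      (a :: t ++ [a])[i + 1]'(by simp at hi ⊢; omega) =
        (a :: t)[(i + 1) % (a :: t).length]'(Nat.mod_lt _ (by omega)) := by
    intro i hi
    rcases Nat.lt_or_ge (i + 1) (a :: t).length with h1 | h1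
    · simp only [List.getElem_append_left h1, Nat.mod_eq_of_lt h1]
    · have h2 : i + 1 = (a :: t).length := by omega
      simp only [h2, Nat.mod_self, List.getElem_concat_length, List.getElem_cons_zero]
  rw [Cycle.chain_coe_cons, ← List.cons_append, List.isChain_iff_getElem]
  refine forall_congr' fun i => ⟨fun h hi => ?_, fun h hi => ?_⟩
  · have := h (by simp at hi ⊢; omega)
    rwa [List.getElem_append_left hi, hsucc i hi] at this
  · have hi' : i < (a :: t).length := by simp at hi ⊢; omega
    rw [List.getElem_append_left hi', hsucc i hi']
    exact h hi'

theorem Cycle.chain_coe_iff_isChain_append {α : Type*} {r : α → α → Prop} {l : List α} {x : α}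
    (hx : l.head? = some x) : Cycle.Chain r (l : Cycle α) ↔ List.IsChain r (l ++ [x]) := by
  obtain ⟨t, rfl⟩ := List.head?_eq_some_iff.mp hx
  rw [Cycle.chain_coe_cons, List.cons_append]

theorem ZMod.exists_add_natCast_eq_sub_one {m : ℕ} [NeZero m] {a b : ZMod m} (hab : a ≠ b)
    (hab' : a ≠ b - 1) : ∃ e : ℕ, e + 2 < m ∧ b + e = a - 1 := by
  have hecast : ((a - 1 - b).val : ZMod m) = a - 1 - b := ZMod.natCast_zmod_val _
  refine ⟨(a - 1 - b).val, ?_, by rw [hecast]; ring⟩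
  have h1 : (a - 1 - b).val + 1 ≠ m := fun h => hab (by
    have : (((a - 1 - b).val + 1 : ℕ) : ZMod m) = 0 := by rw [h, ZMod.natCast_self]
    push_cast [hecast] at this
    linear_combination this)
  have h2 : (a - 1 - b).val + 2 ≠ m := fun h => hab' (by
    have : (((a - 1 - b).val + 2 : ℕ) : ZMod m) = 0 := by rw [h, ZMod.natCast_self]
    push_cast [hecast] at this
    linear_combination this)
  have := ZMod.val_lt (a - 1 - b)
  omega

section

variable {V : Type*} {G : SimpleGraph V}

theorem TEdge.symm [Fintype V] {x y : V} (h : TEdge G x y) : TEdge G y x :=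
  ⟨h.1.symm, h.2.imp SimpleGraph.Adj.symm (by omega)⟩

theorem TEdge.mono [Fintype V] {H : SimpleGraph V} (hGH : G ≤ H) {x y : V} (h : TEdge G x y) :
    TEdge H x y :=
  ⟨h.1, h.2.imp (fun h => hGH h) fun h => h.trans (add_le_add
    (Set.ncard_le_ncard (SimpleGraph.neighborSet_mono hGH x))
    (Set.ncard_le_ncard (SimpleGraph.neighborSet_mono hGH y)))⟩

namespace SimpleGraph

theorem cycle_chain_of_adj {l : List V} (hl : l.IsChain G.Adj) {x y : V}
    (hx : l.head? = some x) (hy : l.getLast? = some y) (hxy : G.Adj x y) :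
    Cycle.Chain G.Adj (l : Cycle V) := by
  rw [Cycle.chain_coe_iff_isChain_append hx, List.isChain_append]
  exact ⟨hl, List.isChain_singleton _, by simp [hy, hxy.symm]⟩

theorem cycle_chain_append_common_neighbor {l : List V} (hl : l.IsChain G.Adj) {x y z : V}
    (hx : l.head? = some x) (hy : l.getLast? = some y) (hxz : G.Adj x z) (hyz : G.Adj y z) :
    Cycle.Chain G.Adj ((l ++ [z] : List V) : Cycle V) := by
  rw [Cycle.chain_coe_iff_isChain_append (x := x) (by simp [hx]), List.append_assoc,
    List.singleton_append, List.isChain_append]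
  exact ⟨hl, List.isChain_pair.mpr hxz.symm, by simp [hy, hyz]⟩

theorem cycle_chain_append_reverse {l₁ l₂ : List V} (h₁ : l₁.IsChain G.Adj)
    (h₂ : l₂.IsChain G.Adj) {x v u y : V} (hx : l₁.head? = some x) (hv : l₁.getLast? = some v)
    (hu : l₂.head? = some u) (hy : l₂.getLast? = some y) (hxu : G.Adj x u) (hvy : G.Adj v y) :
    Cycle.Chain G.Adj ((l₁ ++ l₂.reverse : List V) : Cycle V) := by
  rw [Cycle.chain_coe_iff_isChain_append (x := x) (by simp [hx]), List.append_assoc,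
    ← List.reverse_cons, List.isChain_append, List.isChain_reverse]
  refine ⟨h₁, ?_, by simpa [hv, hy] using hvy⟩
  exact (List.isChain_cons.mpr ⟨by simp [hu, hxu], h₂⟩).imp fun _ _ h => h.symm

theorem card_neighborFinset_inter_add_le [Fintype V] [DecidableEq V] [DecidableRel G.Adj]
    {l : List V} {x y : V} (hx : l.head? = some x) (hy : l.getLast? = some y)
    (hcross : ∀ i (hi : i + 1 < l.length), G.Adj x l[i + 1] → ¬ G.Adj y l[i]) :
    #(G.neighborFinset x ∩ l.toFinset) + #(G.neighborFinset y ∩ l.toFinset) ≤ l.length - 1 := by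
  obtain ⟨h0, hx⟩ := List.getElem?_eq_some_iff.mp (List.head?_eq_getElem? ▸ hx)
  obtain ⟨hk, hy⟩ := List.getElem?_eq_some_iff.mp (List.getLast?_eq_getElem? ▸ hy)
  set I := univ.filter fun i : Fin (l.length - 1) => G.Adj x (l[i.val + 1]'(by omega))
  set J := univ.filter fun i : Fin (l.length - 1) => G.Adj y (l[i.val]'(by omega))
  have hxI : G.neighborFinset x ∩ l.toFinset ⊆ I.image fun i => l[i.val + 1]'(by omega) := by
    intro v hv
    simp only [mem_inter, mem_neighborFinset, List.mem_toFinset] at hv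
    obtain ⟨j, hj, rfl⟩ := List.getElem_of_mem hv.2
    have hj0 : j ≠ 0 := by rintro rfl; exact G.loopless.irrefl _ (hx ▸ hv.1)
    refine mem_image.mpr ⟨⟨j - 1, by omega⟩, mem_filter.mpr ⟨mem_univ _, ?_⟩, ?_⟩ <;>
      simp only [Nat.sub_add_cancel (Nat.pos_of_ne_zero hj0), hv.1]
  have hyJ : G.neighborFinset y ∩ l.toFinset ⊆ J.image fun i => l[i.val]'(by omega) := by
    intro v hv
    simp only [mem_inter, mem_neighborFinset, List.mem_toFinset] at hv
    obtain ⟨j, hj, rfl⟩ := List.getElem_of_mem hv.2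
    have hjk : j ≠ l.length - 1 := by rintro rfl; exact G.loopless.irrefl _ (hy ▸ hv.1)
    exact mem_image.mpr ⟨⟨j, by omega⟩, mem_filter.mpr ⟨mem_univ _, hv.1⟩, rfl⟩
  have hIJ : Disjoint I J := disjoint_filter.mpr fun i _ hxi => hcross i (by omega) hxi
  calc #(G.neighborFinset x ∩ l.toFinset) + #(G.neighborFinset y ∩ l.toFinset)
      ≤ #I + #J := add_le_add ((card_le_card hxI).trans card_image_le)
        ((card_le_card hyJ).trans card_image_le)
    _ = #(I ∪ J) := (card_union_of_disjoint hIJ).symm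
    _ ≤ l.length - 1 := (card_le_univ _).trans (Fintype.card_fin _).le

theorem exists_common_neighbor_notMem_of_noncrossing [Fintype V] {l : List V} (hnd : l.Nodup)
    {x y : V} (hx : l.head? = some x) (hy : l.getLast? = some y)
    (hcross : ∀ i (hi : i + 1 < l.length), G.Adj x l[i + 1] → ¬ G.Adj y l[i])
    (hdeg : Fintype.card V ≤ (G.neighborSet x).ncard + (G.neighborSet y).ncard) :
    ∃ z, z ∉ l ∧ G.Adj x z ∧ G.Adj y z := by
  classical
  by_contra! hnone
  have hdisj : Disjoint (G.neighborFinset x \ l.toFinset) (G.neighborFinset y \ l.toFinset) := by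
    refine Finset.disjoint_left.mpr fun z hzx hzy => ?_
    simp only [mem_sdiff, mem_neighborFinset, List.mem_toFinset] at hzx hzy
    exact hnone z hzx.2 hzx.1 hzy.1
  have hout : #(G.neighborFinset x \ l.toFinset) + #(G.neighborFinset y \ l.toFinset) ≤
      Fintype.card V - l.length := by
    rw [← card_union_of_disjoint hdisj, ← List.toFinset_card_of_nodup hnd, ← card_compl]
    exact card_le_card (union_subset (fun z hz => mem_compl.mpr (mem_sdiff.mp hz).2)
      (fun z hz => mem_compl.mpr (mem_sdiff.mp hz).2))
  have hin := card_neighborFinset_inter_add_le hx hy hcross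
  have hlen : 0 < l.length := List.length_pos_iff.mpr (by rintro rfl; simp at hx)
  have hle : l.length ≤ Fintype.card V := List.toFinset_card_of_nodup hnd ▸ card_le_univ _
  simp only [← coe_neighborFinset, Set.ncard_coe_finset,
    ← card_inter_add_card_sdiff (G.neighborFinset _) l.toFinset] at hdeg
  omega

theorem exists_cycle_of_path_of_tEdge [Fintype V] {l : List V} (hnd : l.Nodup)
    (hl : l.IsChain G.Adj) {x y : V} (hx : l.head? = some x) (hy : l.getLast? = some y)
    (hxy : TEdge G x y) :
    ∃ c : List V, Cycle.Chain G.Adj (c : Cycle V) ∧ c.Nodup ∧ l.length ≤ c.length := by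
  rcases hxy.2 with hadj | hdeg
  · exact ⟨l, cycle_chain_of_adj hl hx hy hadj, hnd, le_rfl⟩
  by_cases hcross : ∃ i, ∃ hi : i + 1 < l.length, G.Adj x l[i + 1] ∧ G.Adj y l[i]
  · obtain ⟨i, hi, hxi, hyi⟩ := hcross
    have hperm : (l.take (i + 1) ++ (l.drop (i + 1)).reverse).Perm l := by
      simpa using (List.reverse_perm (l.drop (i + 1))).append_left (l.take (i + 1))
    refine ⟨_, cycle_chain_append_reverse (hl.take _) (hl.drop _) ?_ ?_ ?_ ?_ hxi hyi.symm,
      hperm.nodup_iff.mpr hnd, hperm.length_eq.ge⟩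
    · simpa [List.head?_take] using hx
    · simp [List.getLast?_take]
    · simp [List.head?_drop]
    · simpa [List.getLast?_drop, show ¬ l.length ≤ i + 1 by omega] using hy
  · push Not at hcross
    obtain ⟨z, hzl, hxz, hyz⟩ := exists_common_neighbor_notMem_of_noncrossing hnd hx hy hcross hdeg
    exact ⟨l ++ [z], cycle_chain_append_common_neighbor hl hx hy hxz hyz,
      hnd.append (List.nodup_singleton z) (by simpa using hzl), by simp⟩

variable {x y : V}

theorem isChain_of_cycle_chain_sup_edge {r : List V}
    (hr : Cycle.Chain (G ⊔ edge x y).Adj (r : Cycle V)) (hnd : r.Nodup) (h3 : 3 ≤ r.length)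
    {u v : V} (hu : r.head? = some u) (hv : r.getLast? = some v) (huv : s(x, y) = s(v, u)) :
    r.IsChain G.Adj := by
  obtain ⟨_, rfl⟩ := List.getElem?_eq_some_iff.mp (List.head?_eq_getElem? ▸ hu)
  obtain ⟨_, rfl⟩ := List.getElem?_eq_some_iff.mp (List.getLast?_eq_getElem? ▸ hv)
  refine List.isChain_iff_getElem.mpr fun j hj => ?_
  have := (Cycle.chain_coe_iff_getElem (List.ne_nil_of_length_pos (by omega))).mp hr j (by omega)
  simp only [Nat.mod_eq_of_lt hj, sup_adj, adj_edge] at this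
  refine this.resolve_right fun ⟨he, _⟩ => ?_
  rw [huv, Sym2.eq_iff] at he
  simp only [hnd.getElem_inj_iff] at he
  omega

theorem exists_path_of_cycle_chain_sup_edge {l : List V}
    (hl : Cycle.Chain (G ⊔ edge x y).Adj (l : Cycle V)) (hnd : l.Nodup) (h3 : 3 ≤ l.length) :
    Cycle.Chain G.Adj (l : Cycle V) ∨ ∃ p : List V, p.Nodup ∧ p.IsChain G.Adj ∧
      p.head? = some x ∧ p.getLast? = some y ∧ p.length = l.length := by
  have hne : l ≠ [] := List.ne_nil_of_length_pos (by omega)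
  by_contra! h
  obtain ⟨i, hi, hbad⟩ := not_forall₂.mp (mt (Cycle.chain_coe_iff_getElem hne).mpr h.1)
  have hedge := (Cycle.chain_coe_iff_getElem hne).mp hl i hi
  simp only [sup_adj, hbad, false_or, adj_edge] at hedge
  -- rotate the cycle so that the added edge joins its last entry to its first
  set r := l.rotate (i + 1)
  have hr0 : r.head? = some (l[(i + 1) % l.length]'(Nat.mod_lt _ (by omega))) := by
    rw [List.head?_eq_getElem?, List.getElem?_eq_getElem (by simp [r]; omega),
      List.getElem_rotate]
    simp
  have hrk : r.getLast? = some l[i] := by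
    rw [List.getLast?_eq_getElem?, List.getElem?_eq_getElem (by simp [r]; omega),
      List.getElem_rotate]
    simp only [List.length_rotate, r]
    congr 2
    rw [show l.length - 1 + (i + 1) = i + l.length by omega, Nat.add_mod_right,
      Nat.mod_eq_of_lt hi]
  have hrnd : r.Nodup := (List.IsRotated.forall _ _).nodup_iff.mpr hnd
  have hrl : (r : Cycle V) = l := Cycle.coe_eq_coe.mpr (List.IsRotated.forall _ _)
  have hr : r.IsChain G.Adj :=
    isChain_of_cycle_chain_sup_edge (hrl ▸ hl) hrnd (by simpa [r] using h3) hr0 hrk hedge.1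
  rcases Sym2.eq_iff.mp hedge.1 with ⟨rfl, rfl⟩ | ⟨rfl, rfl⟩
  · exact h.2 r.reverse (List.nodup_reverse.mpr hrnd)
      (List.isChain_reverse.mpr (hr.imp fun _ _ h => h.symm)) (by simpa using hrk)
      (by simpa using hr0) (by simp [r])
  · exact h.2 r hrnd hr hr0 hrk (by simp [r])

theorem exists_cycle_of_cycle_chain_sup_edge [Fintype V] (hxy : TEdge G x y) {l : List V}
    (hl : Cycle.Chain (G ⊔ edge x y).Adj (l : Cycle V)) (hnd : l.Nodup) (h3 : 3 ≤ l.length) :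
    ∃ c : List V, Cycle.Chain G.Adj (c : Cycle V) ∧ c.Nodup ∧ l.length ≤ c.length := by
  rcases exists_path_of_cycle_chain_sup_edge hl hnd h3 with h | ⟨p, hpnd, hp, hx, hy, hlen⟩
  · exact ⟨l, h, hnd, le_rfl⟩
  · obtain ⟨c, hc, hcnd, hpc⟩ := exists_cycle_of_path_of_tEdge hpnd hp hx hy hxy
    exact ⟨c, hc, hcnd, hlen ▸ hpc⟩

end SimpleGraph

namespace IsCycleMap

variable {m : ℕ} {f : ZMod m → V}

theorem adj_add_natCast_succ (hf : IsCycleMap G m f) (b : ZMod m) (s : ℕ) :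
    G.Adj (f (b + s)) (f (b + (s + 1 : ℕ))) := by
  simpa [add_assoc] using hf.2.2 (b + s)

theorem eq_of_apply_add_natCast_eq (hf : IsCycleMap G m f) {b : ZMod m} {s t : ℕ} (hs : s < m)
    (ht : t < m) (h : f (b + s) = f (b + t)) : s = t := by
  have := (ZMod.natCast_eq_natCast_iff' s t m).mp (add_left_cancel (hf.2.1 h))
  rwa [Nat.mod_eq_of_lt hs, Nat.mod_eq_of_lt ht] at this

theorem exists_path_skipping (hf : IsCycleMap G m f) (b : ZMod m) {e : ℕ} (he : e + 2 < m) :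
    ∃ A : List V, (f b :: A).IsChain (G ⊔ edge (f (b + e)) (f (b + e + 2))).Adj ∧ A.Nodup ∧
      A.length = m - 2 ∧ A.getLast? = some (f (b - 1)) ∧
      ∀ w ∈ A, w ∈ Set.range f ∧ w ≠ f b ∧ w ≠ f (b + e + 1) := by
  set F : ℕ → V := fun s => f (b + s)
  have hF : ∀ {s t}, s < m → t < m → F s = F t → s = t := hf.eq_of_apply_add_natCast_eq
  set O := List.range' 1 e ++ List.range' (e + 2) (m - 2 - e)
  have hO : ∀ s ∈ O, 1 ≤ s ∧ s < m ∧ s ≠ e + 1 := by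
    simp only [O, List.mem_append, List.mem_range'_1]
    omega
  refine ⟨O.map F, ?_, ?_, ?_, ?_, ?_⟩
  · have hcyc : ∀ ⦃s t⦄, t = s + 1 → (G ⊔ edge (f (b + e)) (f (b + e + 2))).Adj (F s) (F t) :=
      fun s _ h => h ▸ Or.inl (hf.adj_add_natCast_succ b s)
    have hskip : (G ⊔ edge (f (b + e)) (f (b + e + 2))).Adj (F e) (F (e + 2)) := by
      refine Or.inr ((edge_adj ..).mpr ⟨Or.inl ⟨rfl, by simp [F, add_assoc]⟩, fun h => ?_⟩)
      exact absurd (hF (by omega) he h) (by omega)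
    rw [show f b = F 0 by simp [F], ← List.map_cons, ← List.cons_append,
      show 0 :: List.range' 1 e = List.range' 0 (e + 1) by simp [List.range'_succ],
      List.isChain_map, List.isChain_append]
    refine ⟨(List.isChain_range' _ _ _).imp hcyc, (List.isChain_range' _ _ _).imp hcyc, ?_⟩
    simpa [List.getLast?_range', List.head?_range', show m - 2 - e ≠ 0 by omega] using hskip
  · refine List.Nodup.map_on (fun s hs t ht h => hF (hO s hs).2.1 (hO t ht).2.1 h) ?_
    refine List.Nodup.append List.nodup_range' List.nodup_range' fun s hs ht => ?_
    simp only [List.mem_range'_1] at hs ht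
    omega
  · simp [O]
    omega
  · rw [List.getLast?_map, List.getLast?_append, List.getLast?_range',
      if_neg (by omega : m - 2 - e ≠ 0)]
    simp [F, show e + 2 + (m - 2 - e) - 1 = m - 1 by omega, Nat.cast_sub (by omega : 1 ≤ m),
      sub_eq_add_neg]
  · simp only [List.mem_map]
    rintro _ ⟨s, hs, rfl⟩
    refine ⟨⟨_, rfl⟩, fun h => ?_, fun h => ?_⟩
    · have := hF (t := 0) (hO s hs).2.1 (by omega) (h.trans (by simp [F]))
      exact absurd (hO s hs).1 (by omega)
    · exact (hO s hs).2.2 (hF (hO s hs).2.1 (by omega) (h.trans (by simp [F, add_assoc])))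

theorem exists_long_path_sup_edge (hf : IsCycleMap G m f) {a b : ZMod m} (ha : a ≠ b - 1)
    {p : G.Walk (f a) (f b)} (hp : p.IsPath) (hlen : 2 ≤ p.length)
    (hoff : ∀ v ∈ p.support, v ∈ Set.range f → v = f a ∨ v = f b) :
    ∃ Q : List V, Q.Nodup ∧ Q.IsChain (G ⊔ edge (f (a - 1)) (f (a + 1))).Adj ∧
      Q.head? = some (f a) ∧ Q.getLast? = some (f (b - 1)) ∧ m + 1 ≤ Q.length := by
  have : NeZero m := ⟨by have := hf.1; omega⟩
  have hab : a ≠ b := by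
    rintro rfl
    simp [Walk.length_eq_zero_iff.mpr (Walk.isPath_iff_nil.mp hp)] at hlen
  obtain ⟨e, he, hbe⟩ := ZMod.exists_add_natCast_eq_sub_one hab ha
  obtain ⟨A, hA, hAnd, hAlen, hAlast, hAmem⟩ := hf.exists_path_skipping b he
  rw [hbe, show a - 1 + 2 = a + 1 by ring] at hA
  simp only [hbe, sub_add_cancel] at hAmem
  refine ⟨p.support ++ A, ?_, ?_, ?_, ?_, ?_⟩
  · refine hp.support_nodup.append hAnd fun v hv hvA => ?_
    obtain ⟨hvf, hvb, hva⟩ := hAmem v hvA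
    exact (hoff v hv hvf).elim hva hvb
  · obtain ⟨hjoin, hAchain⟩ := List.isChain_cons.mp hA
    refine List.isChain_append.mpr ⟨p.isChain_adj_support.imp fun _ _ h => Or.inl h, hAchain, ?_⟩
    rw [List.getLast?_eq_some_getLast p.support_ne_nil, p.getLast_support]
    simpa using hjoin
  · rw [List.head?_append, List.head?_eq_some_head p.support_ne_nil, p.head_support]
    rfl
  · simp [List.getLast?_append, hAlast]
  · simp [hAlen]
    omega

end IsCycleMap

namespace IsLongestCycleMap

variable {m : ℕ} {f : ZMod m → V}

theorem length_le (hC : IsLongestCycleMap G m f) {l : List V}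
    (hl : Cycle.Chain G.Adj (l : Cycle V)) (hnd : l.Nodup) (h3 : 3 ≤ l.length) :
    l.length ≤ m := by
  have : NeZero l.length := ⟨by omega⟩
  have : Fact (1 < l.length) := ⟨by omega⟩
  refine hC.2 l.length (fun i => l[i.val]'i.val_lt) ⟨h3, fun i j hij => ?_, fun i => ?_⟩
  · exact ZMod.val_injective _ (hnd.getElem_inj_iff.mp hij)
  · have hval : (i + 1).val = (i.val + 1) % l.length := by rw [ZMod.val_add, ZMod.val_one]
    simp only [hval]
    exact (Cycle.chain_coe_iff_getElem (List.ne_nil_of_length_pos (by omega))).mp hl _ i.val_lt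

theorem comp_neg (hC : IsLongestCycleMap G m f) : IsLongestCycleMap G m (fun i => f (-i)) :=
  ⟨⟨hC.1.1, hC.1.2.1.comp neg_injective,
    fun i => by convert (hC.1.2.2 (-(i + 1))).symm using 2; ring⟩, hC.2⟩

theorem not_tEdge_apply_sub_one [Fintype V] (hC : IsLongestCycleMap G m f) {a b : ZMod m}
    {p : G.Walk (f a) (f b)} (hp : p.IsPath) (hlen : 2 ≤ p.length)
    (hoff : ∀ v ∈ p.support, v ∈ Set.range f → v = f a ∨ v = f b)
    (hvi : TEdge G (f (a - 1)) (f (a + 1))) : ¬ TEdge G (f a) (f (b - 1)) := by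
  intro hvj
  have hm := hC.1.1
  obtain ⟨Q, hQnd, hQ, hQa, hQb, hQlen⟩ :=
    hC.1.exists_long_path_sup_edge (fun h => hvj.1 (congrArg f h)) hp hlen hoff
  obtain ⟨c, hc, hcnd, hQc⟩ :=
    SimpleGraph.exists_cycle_of_path_of_tEdge hQnd hQ hQa hQb (hvj.mono le_sup_left)
  obtain ⟨c', hc', hc'nd, hcc'⟩ :=
    SimpleGraph.exists_cycle_of_cycle_chain_sup_edge hvi hc hcnd (by omega)
  have := hC.length_le hc' hc'nd (by omega)
  omega

end IsLongestCycleMap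

end

theorem lemma3c_general {V : Type*} [Fintype V] (G : SimpleGraph V)
    (m : ℕ) (f : ZMod m → V) (hC : IsLongestCycleMap G m f)
    (R : Set V) (hR : IsCompOf G (Set.range f)ᶜ R)
    (a b : ZMod m)
    (p : G.Walk (f a) (f b)) (hp : p.IsPath) (hlen : 2 ≤ p.length)
    (hint : ∀ x ∈ p.support, x ≠ f a → x ≠ f b → x ∈ R)
    (hvi : TEdge G (f (a - 1)) (f (a + 1))) :
    ¬ TEdge G (f a) (f (b - 1)) ∧ ¬ TEdge G (f a) (f (b + 1)) := by
  have hoff : ∀ v ∈ p.support, v ∈ Set.range f → v = f a ∨ v = f b := by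
    intro v hv hvf
    by_contra! hne
    exact hR.2.1 (hint v hv hne.1 hne.2) hvf
  refine ⟨hC.not_tEdge_apply_sub_one hp hlen hoff hvi, ?_⟩
  have hrange : Set.range (fun i => f (-i)) = Set.range f := neg_surjective.range_comp f
  simpa [sub_eq_add_neg, add_comm] using hC.comp_neg.not_tEdge_apply_sub_one (a := -a) (b := -b)
    (p := p.copy (by simp) (by simp)) (by simpa using hp) (by simpa using hlen)
    (by simpa [hrange] using hoff) (by simpa [add_comm, sub_eq_add_neg] using hvi.symm)

/-- Lemma 3(c): in the longest-cycle setup, if `v_i⁻v_i⁺ ∈ Ẽ(G)` then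
`v_i v_j⁻ ∉ Ẽ(G)` and `v_i v_j⁺ ∉ Ẽ(G)`. -/
theorem lemma3c {V : Type*} [Fintype V] [DecidableEq V] (G : SimpleGraph V)
    (hnh : ¬ G.IsHamiltonian)
    (m : ℕ) (f : ZMod m → V) (hC : IsLongestCycleMap G m f)
    (R : Set V) (hR : IsCompOf G (Set.range f)ᶜ R)
    (a b : ZMod m) (hab : a ≠ b)
    (p : G.Walk (f a) (f b)) (hp : p.IsPath) (hlen : 2 ≤ p.length)
    (hint : ∀ x ∈ p.support, x ≠ f a → x ≠ f b → x ∈ R)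
    (hvi : TEdge G (f (a - 1)) (f (a + 1))) :
    ¬ TEdge G (f a) (f (b - 1)) ∧ ¬ TEdge G (f a) (f (b + 1)) :=
  lemma3c_general G m f hC R hR a b p hp hlen hint hvi
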